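/- Let K be a field and n, m ≥ 1. The join-meet ideal I_{L₂(n,m)} = (a_i b_j − st : 1 ≤ i ≤ n, 1 ≤ j ≤ m) in K[s, a_1, ..., a_n, b_1, ..., b_m, t] is a radical ideal. -/

import Mathlib

open MvPolynomial

/-- Variables of the polynomial ring `K[s, a_1, …, a_n, b_1, …, b_m, t]`
(`a i` stands for `a_{i+1}`). -/
inductive Var (n m : ℕ) : Type where
  | s : Var n m
  | a : Fin n → Var n m
  | b : Fin m → Var n m
  | t : Var n m
deriving DecidableEq

/-- The generators `a_i b_j − s t` of the join-meet ideal of `L₂(n,m)`. -/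
def joinMeetGens (K : Type) [Field K] (n m : ℕ) : Set (MvPolynomial (Var n m) K) :=
  {p | ∃ (i : Fin n) (j : Fin m),
    p = X (Var.a i) * X (Var.b j) - X Var.s * X Var.t}

/-!
The join-meet ideal `I` is the intersection of five prime ideals: the monomial primes
`(s, a)`, `(t, a)`, `(s, b)`, `(t, b)`, and the preimage of `(x₀y₀ - x₁y₁)`, an irreducible
quadric in a UFD, under the substitution `a_i ↦ x₀`, `b_j ↦ y₀`, `s ↦ x₁`, `t ↦ y₁`.
An intersection of primes is radical.

For the inclusion `⊇`, lying in the four monomial primes forces every monomial of `f` to be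
divisible by `st` or by some `a_i b_j`, so `f ≡ st·h` modulo `I`. The fifth prime contains
neither `s` nor `t`, hence contains `h`. Since `st(a_i - a_k)` and `st(b_j - b_l)` lie in `I`,
modulo `I` we may replace `st·h` by `st·h(a_{i₀}, b_{j₀})`, and `h(a_{i₀}, b_{j₀})` is a
multiple of `a_{i₀}b_{j₀} - st` because `h` lies in the fifth prime.
-/
theorem Finsupp.single_one_add_single_one_le {σ : Type*} {d : σ →₀ ℕ} {u v : σ}
    (huv : u ≠ v) (hu : d u ≠ 0) (hv : d v ≠ 0) : single u 1 + single v 1 ≤ d := by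
  classical
  intro w
  simp only [Finsupp.add_apply, Finsupp.single_apply]
  split_ifs with hw hw'
  · exact absurd (hw.trans hw'.symm) huv
  all_goals subst_vars; omega

namespace MvPolynomial

variable {σ R : Type*} [CommRing R]

theorem sub_apply_mem_of_X_sub_apply_mem {J : Ideal (MvPolynomial σ R)}
    (φ : MvPolynomial σ R →ₐ[R] MvPolynomial σ R) (hφ : ∀ i, X i - φ (X i) ∈ J)
    (f : MvPolynomial σ R) : f - φ f ∈ J := by
  rw [← Ideal.Quotient.eq]
  have : (Ideal.Quotient.mkₐ R J).comp φ = Ideal.Quotient.mkₐ R J :=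
    algHom_ext fun i => by simpa [Ideal.Quotient.eq] using J.neg_mem (hφ i)
  exact (AlgHom.congr_fun this f).symm

theorem ker_aeval_indicator_compl_X (S : Set σ) :
    RingHom.ker (aeval (R := R) (Sᶜ.indicator (X (R := R)))) =
      Ideal.span (X '' S : Set (MvPolynomial σ R)) := by
  refine le_antisymm (fun f hf => ?_) (Ideal.span_le.mpr ?_)
  · have hX : ∀ i, (X i : MvPolynomial σ R) - aeval (R := R) (Sᶜ.indicator X) (X i) ∈
        Ideal.span (X '' S : Set (MvPolynomial σ R)) := by
      intro i
      by_cases hi : i ∈ S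
      · simpa [hi] using Ideal.subset_span (Set.mem_image_of_mem X hi)
      · simp [hi]
    have := sub_apply_mem_of_X_sub_apply_mem _ hX f
    rwa [RingHom.mem_ker.mp hf, sub_zero] at this
  · rintro _ ⟨i, hi, rfl⟩
    simp [hi]

theorem isPrime_span_X_image [IsDomain R] (S : Set σ) :
    (Ideal.span (X '' S : Set (MvPolynomial σ R))).IsPrime := by
  rw [← ker_aeval_indicator_compl_X]
  exact RingHom.ker_isPrime _

open Sum

theorem prime_X_mul_X_sub_X_mul_X [IsDomain R] [UniqueFactorizationMonoid R] :
    Prime (X (inl 0) * X (inr 0) - X (inl 1) * X (inr 1) : MvPolynomial (Fin 2 ⊕ Fin 2) R) := by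
  have : (X (inl 0) * X (inr 0) - X (inl 1) * X (inr 1) : MvPolynomial (Fin 2 ⊕ Fin 2) R) =
      sumSMulXSMulY (Finsupp.single 0 1 - Finsupp.single 1 1) := by
    simp [sumSMulXSMulY, Finsupp.linearCombination_single]
  rw [this, ← UniqueFactorizationMonoid.irreducible_iff_prime]
  refine irreducible_sumSMulXSMulY _ ⟨0, by simp, 1, by simp, zero_ne_one⟩ fun r hr => ?_
  exact isUnit_of_dvd_one (by simpa using hr 0)

theorem isPrime_span_X_mul_X_sub_X_mul_X [IsDomain R] [UniqueFactorizationMonoid R] :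
    (Ideal.span {X (inl 0) * X (inr 0) - X (inl 1) * X (inr 1)} :
      Ideal (MvPolynomial (Fin 2 ⊕ Fin 2) R)).IsPrime :=
  (Ideal.span_singleton_prime prime_X_mul_X_sub_X_mul_X.ne_zero).mpr prime_X_mul_X_sub_X_mul_X

theorem X_mul_X_sub_X_mul_X_not_dvd_X [Nontrivial R] (v : Fin 2 ⊕ Fin 2) :
    ¬(X (inl 0) * X (inr 0) - X (inl 1) * X (inr 1) : MvPolynomial (Fin 2 ⊕ Fin 2) R) ∣
      X v := by
  rintro ⟨u, hu⟩
  have := congrArg (eval (Pi.single v 1)) hu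
  rcases v with (i | i) <;> fin_cases i <;> simp at this

end MvPolynomial

namespace JoinMeetL2

open Sum Set

variable {K : Type} [Field K] {n m : ℕ}

def collapse : Var n m → Fin 2 ⊕ Fin 2
  | .a _ => inl 0
  | .b _ => inr 0
  | .s => inl 1
  | .t => inr 1

def pick (i₀ : Fin n) (j₀ : Fin m) : Fin 2 ⊕ Fin 2 → Var n m :=
  Sum.elim ![Var.a i₀, Var.s] ![Var.b j₀, Var.t]

theorem mem_span_joinMeetGens (i : Fin n) (j : Fin m) :
    X (Var.a i) * X (Var.b j) - X Var.s * X Var.t ∈ Ideal.span (joinMeetGens K n m) :=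
  Ideal.subset_span ⟨i, j, rfl⟩

theorem mem_span_X_mul_X_sup_of_mem_inf {f : MvPolynomial (Var n m) K}
    (hf : f ∈ Ideal.span (X '' insert Var.s (range Var.a)) ⊓
      Ideal.span (X '' insert Var.t (range Var.a)) ⊓
      Ideal.span (X '' insert Var.s (range Var.b)) ⊓
      Ideal.span (X '' insert Var.t (range Var.b))) :
    f ∈ Ideal.span {X Var.s * X Var.t} ⊔ Ideal.span (joinMeetGens K n m) := by
  have hsupp : ∀ d ∈ f.support, (d Var.s ≠ 0 ∧ d Var.t ≠ 0) ∨
      (∃ i, d (Var.a i) ≠ 0) ∧ ∃ j, d (Var.b j) ≠ 0 := by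
    simp only [Submodule.mem_inf, mem_ideal_span_X_image, exists_mem_insert,
      exists_range_iff] at hf
    obtain ⟨⟨⟨hsa, hta⟩, hsb⟩, htb⟩ := hf
    intro d hd
    specialize hsa d hd
    specialize hta d hd
    specialize hsb d hd
    specialize htb d hd
    tauto
  have hmonomial : f ∈ Ideal.span ((monomial · (1 : K)) ''
      insert (Finsupp.single Var.s 1 + Finsupp.single Var.t 1)
        (range fun ij : Fin n × Fin m =>
          Finsupp.single (Var.a ij.1) 1 + Finsupp.single (Var.b ij.2) 1)) := by
    rw [mem_ideal_span_monomial_image]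
    intro d hd
    rcases hsupp d hd with ⟨hs, ht⟩ | ⟨⟨i, hi⟩, j, hj⟩
    · exact ⟨_, mem_insert _ _, Finsupp.single_one_add_single_one_le (by simp) hs ht⟩
    · exact ⟨_, mem_insert_of_mem _ ⟨(i, j), rfl⟩,
        Finsupp.single_one_add_single_one_le (by simp) hi hj⟩
  have hX : ∀ u v : Var n m,
      monomial (Finsupp.single u 1 + Finsupp.single v 1) (1 : K) = X u * X v := fun u v => by
    rw [X, X, monomial_mul, one_mul]
  refine Ideal.span_le.mpr ?_ hmonomial
  rintro _ ⟨_, rfl | ⟨⟨i, j⟩, rfl⟩, rfl⟩ <;> simp only [SetLike.mem_coe, hX]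
  · exact Ideal.mem_sup_left (Ideal.mem_span_singleton_self _)
  · rw [← sub_add_cancel (X (Var.a i) * X (Var.b j)) (X Var.s * X Var.t)]
    exact add_mem (Ideal.mem_sup_right (mem_span_joinMeetGens i j))
      (Ideal.mem_sup_left (Ideal.mem_span_singleton_self _))

theorem X_s_mul_X_t_mul_sub_rename_mem (i₀ : Fin n) (j₀ : Fin m)
    (h : MvPolynomial (Var n m) K) :
    X Var.s * X Var.t * (h - rename (pick i₀ j₀ ∘ collapse) h) ∈
      Ideal.span (joinMeetGens K n m) := by
  set I := Ideal.span (joinMeetGens K n m)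
  have hcolon : h - rename (pick i₀ j₀ ∘ collapse) h ∈ I.colon {X Var.s * X Var.t} := by
    refine sub_apply_mem_of_X_sub_apply_mem _ (fun v => ?_) h
    rw [Submodule.mem_colon_singleton, smul_eq_mul]
    cases v with
    | s => simp [collapse, pick]
    | t => simp [collapse, pick]
    | a i =>
      have : (X (Var.a i) - X (Var.a i₀) : MvPolynomial (Var n m) K) * (X Var.s * X Var.t) =
          X (Var.a i₀) * (X (Var.a i) * X (Var.b j₀) - X Var.s * X Var.t) -
            X (Var.a i) * (X (Var.a i₀) * X (Var.b j₀) - X Var.s * X Var.t) := by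
        ring
      simpa [collapse, pick, this] using sub_mem (I.mul_mem_left _ (mem_span_joinMeetGens i j₀))
        (I.mul_mem_left _ (mem_span_joinMeetGens i₀ j₀))
    | b j =>
      have : (X (Var.b j) - X (Var.b j₀) : MvPolynomial (Var n m) K) * (X Var.s * X Var.t) =
          X (Var.b j₀) * (X (Var.a i₀) * X (Var.b j) - X Var.s * X Var.t) -
            X (Var.b j) * (X (Var.a i₀) * X (Var.b j₀) - X Var.s * X Var.t) := by
        ring
      simpa [collapse, pick, this] using sub_mem (I.mul_mem_left _ (mem_span_joinMeetGens i₀ j))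
        (I.mul_mem_left _ (mem_span_joinMeetGens i₀ j₀))
  rwa [Submodule.mem_colon_singleton, smul_eq_mul, mul_comm] at hcolon

theorem X_s_mul_X_t_mul_mem_of_rename_collapse_mem (i₀ : Fin n) (j₀ : Fin m)
    {h : MvPolynomial (Var n m) K}
    (hh : rename collapse h ∈ Ideal.span {X (inl 0) * X (inr 0) - X (inl 1) * X (inr 1)}) :
    X Var.s * X Var.t * h ∈ Ideal.span (joinMeetGens K n m) := by
  obtain ⟨u, hu⟩ := Ideal.mem_span_singleton.mp hh
  have hpicked : rename (pick i₀ j₀ ∘ collapse) h ∈ Ideal.span (joinMeetGens K n m) := by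
    rw [← rename_rename, hu, map_mul]
    exact Ideal.mul_mem_right _ _ (by simpa [pick] using mem_span_joinMeetGens i₀ j₀)
  have := add_mem (X_s_mul_X_t_mul_sub_rename_mem i₀ j₀ h)
    (Ideal.mul_mem_left _ (X Var.s * X Var.t) hpicked)
  rwa [← mul_add, sub_add_cancel] at this

theorem span_joinMeetGens_le_comap :
    Ideal.span (joinMeetGens K n m) ≤
      (Ideal.span {X (inl 0) * X (inr 0) - X (inl 1) * X (inr 1)}).comap (rename collapse) := by
  rw [Ideal.span_le]
  rintro _ ⟨i, j, rfl⟩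
  simp [collapse]

theorem span_joinMeetGens_eq_inf (i₀ : Fin n) (j₀ : Fin m) :
    Ideal.span (joinMeetGens K n m) =
      Ideal.span (X '' insert Var.s (range Var.a)) ⊓
        Ideal.span (X '' insert Var.t (range Var.a)) ⊓
        Ideal.span (X '' insert Var.s (range Var.b)) ⊓
        Ideal.span (X '' insert Var.t (range Var.b)) ⊓
        (Ideal.span {X (inl 0) * X (inr 0) - X (inl 1) * X (inr 1)}).comap (rename collapse) := by
  refine le_antisymm (le_inf ?_ span_joinMeetGens_le_comap) fun f hf => ?_
  · rw [Ideal.span_le]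
    rintro _ ⟨i, j, rfl⟩
    have hXX : ∀ {u v} {S : Set (Var n m)}, u ∈ S ∨ v ∈ S →
        (X u * X v : MvPolynomial (Var n m) K) ∈ Ideal.span (X '' S) := by
      rintro u v S (hu | hv)
      · exact Ideal.mul_mem_right _ _ (Ideal.subset_span (mem_image_of_mem X hu))
      · exact Ideal.mul_mem_left _ _ (Ideal.subset_span (mem_image_of_mem X hv))
    simp only [SetLike.mem_coe, Submodule.mem_inf]
    refine ⟨⟨⟨?_, ?_⟩, ?_⟩, ?_⟩ <;> exact sub_mem (hXX (by simp)) (hXX (by simp))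
  obtain ⟨hmonomial, hf⟩ := Submodule.mem_inf.mp hf
  obtain ⟨h, g, hg, rfl⟩ :=
    Ideal.mem_span_singleton_sup.mp (mem_span_X_mul_X_sup_of_mem_inf hmonomial)
  set P := (Ideal.span {X (inl 0) * X (inr 0) - X (inl 1) * X (inr 1)}).comap
    (rename (R := K) (collapse (n := n) (m := m)))
  have hP : P.IsPrime := Ideal.comap_isPrime _ _ (H := isPrime_span_X_mul_X_sub_X_mul_X)
  have hX : ∀ v, X v ∉ P := fun v => by
    simpa [P, Ideal.mem_span_singleton] using X_mul_X_sub_X_mul_X_not_dvd_X (collapse v)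
  have hh : h ∈ P := by
    have hst : h * (X Var.s * X Var.t) ∈ P :=
      (P.add_mem_iff_left (span_joinMeetGens_le_comap hg)).mp hf
    refine (hP.mem_or_mem hst).resolve_right fun hst => ?_
    exact (hP.mem_or_mem hst).elim (hX _) (hX _)
  rw [mul_comm]
  exact add_mem (X_s_mul_X_t_mul_mem_of_rename_collapse_mem i₀ j₀ hh) hg

end JoinMeetL2

/-- the join-meet ideal `I_{L₂(n,m)} = (a_i b_j − st)` is radical. -/
theorem joinMeetIdeal_L2_isRadical (K : Type) [Field K] (n m : ℕ)
    (hn : 1 ≤ n) (hm : 1 ≤ m) :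
    (Ideal.span (joinMeetGens K n m)).IsRadical := by
  rw [JoinMeetL2.span_joinMeetGens_eq_inf ⟨0, hn⟩ ⟨0, hm⟩]
  have hP := Ideal.comap_isPrime (rename (R := K) (JoinMeetL2.collapse (n := n) (m := m))) _
    (H := isPrime_span_X_mul_X_sub_X_mul_X)
  exact ((((isPrime_span_X_image _).isRadical.inf (isPrime_span_X_image _).isRadical).inf
    (isPrime_span_X_image _).isRadical).inf (isPrime_span_X_image _).isRadical).inf hP.isRadical
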